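/- arXiv:2208.06185 — 6 statements merged into one kernel-verified Lean document; each statement's English description precedes it below -/
import Mathlib

section
/- The multiplicity function of a path is measurable: for a path γ : [a,b] → X in a metric space, the function x ↦ #(γ⁻¹(x)) (with value ∞ when the preimage is infinite) is H¹-measurable. One can prove this by fixing a sequence (𝒦ₙ) of countable Borel partitions of [a,b] with mesh tending to 0 and each 𝒦_{n+1} refining 𝒦ₙ, so that #(γ⁻¹(x)) = lim_{n→∞} Σ_{E ∈ 𝒦ₙ} χ_{γ(E)}(x) for every x ∈ X. -/
open MeasureTheory Set
open scoped MeasureTheory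

/-- The superlevel set `{x | m ≤ #(γ⁻¹(x) ∩ [a,b])}` is a countable union of finite
intersections of images of compact intervals with rational endpoints. -/
private lemma multiplicity_superlevel_eq {X : Type*} [MetricSpace X]
    (a b : ℝ) (γ : ℝ → X) (m : ℕ) :
    {x : X | (m : ℕ∞) ≤ (γ ⁻¹' {x} ∩ Icc a b).encard} =
      ⋃ (c : Fin m → ℚ × ℚ) (_ : Pairwise fun i j =>
        Disjoint (Icc ((c i).1 : ℝ) ((c i).2 : ℝ)) (Icc ((c j).1 : ℝ) ((c j).2 : ℝ))),
        ⋂ i, γ '' (Icc ((c i).1 : ℝ) ((c i).2 : ℝ) ∩ Icc a b) := by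
  ext x
  simp only [mem_setOf_eq, mem_iUnion, mem_iInter]
  constructor
  · intro hm
    obtain ⟨t, hts, htm⟩ := Set.exists_subset_encard_eq hm
    have htfin : t.Finite := Set.finite_of_encard_eq_coe htm
    have hcard : htfin.toFinset.card = m := by
      have := htfin.encard_eq_coe_toFinset_card
      rw [htm] at this
      exact_mod_cast this.symm
    -- enumerate `t` by an injective function `f : Fin m → ℝ`
    set f : Fin m → ℝ := fun i => (htfin.toFinset.orderIsoOfFin hcard i : ℝ) with hf
    have hfinj : Function.Injective f := fun i j hij => by
      have := (htfin.toFinset.orderIsoOfFin hcard).injective (Subtype.ext hij)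
      exact this
    have hft : ∀ i, f i ∈ t := fun i =>
      htfin.mem_toFinset.1 (htfin.toFinset.orderIsoOfFin hcard i).2
    have hfA : ∀ i, γ (f i) = x ∧ f i ∈ Icc a b := fun i => by
      have := hts (hft i)
      exact ⟨this.1, this.2⟩
    -- choose a positive separation δ
    have hsep : ∃ δ : ℝ, 0 < δ ∧ ∀ i j : Fin m, i ≠ j → 3 * δ ≤ |f i - f j| := by
      rcases isEmpty_or_nonempty (Fin m) with hE | hNE
      · exact ⟨1, one_pos, fun i => (IsEmpty.false i).elim⟩
      by_cases hm1 : ∀ i j : Fin m, i = j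
      · exact ⟨1, one_pos, fun i j hij => absurd (hm1 i j) hij⟩
      push_neg at hm1
      obtain ⟨i0, j0, hij0⟩ := hm1
      have hne : (Finset.univ.offDiag : Finset (Fin m × Fin m)).Nonempty :=
        ⟨(i0, j0), Finset.mem_offDiag.2 ⟨Finset.mem_univ _, Finset.mem_univ _, hij0⟩⟩
      set δ := (Finset.univ.offDiag.inf' hne fun p => |f p.1 - f p.2|) / 3 with hδ
      refine ⟨δ, ?_, ?_⟩
      · have : 0 < Finset.univ.offDiag.inf' hne fun p => |f p.1 - f p.2| := by
          rw [Finset.lt_inf'_iff]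
          intro p hp
          have hpne : p.1 ≠ p.2 := (Finset.mem_offDiag.1 hp).2.2
          exact abs_pos.2 (sub_ne_zero.2 fun h => hpne (hfinj h))
        positivity
      · intro i j hij
        have hmem : (i, j) ∈ Finset.univ.offDiag :=
          Finset.mem_offDiag.2 ⟨Finset.mem_univ _, Finset.mem_univ _, hij⟩
        have := Finset.inf'_le (fun p : Fin m × Fin m => |f p.1 - f p.2|) hmem
        rw [hδ]
        linarith
    obtain ⟨δ, hδ0, hδ⟩ := hsep
    -- choose rational endpoints
    have hchoice : ∀ i : Fin m, ∃ c : ℚ × ℚ,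
        (c.1 : ℝ) ≤ f i ∧ f i ≤ (c.2 : ℝ) ∧ f i - δ < c.1 ∧ (c.2 : ℝ) < f i + δ := by
      intro i
      obtain ⟨p, hp1, hp2⟩ := exists_rat_btwn (show f i - δ < f i by linarith)
      obtain ⟨q, hq1, hq2⟩ := exists_rat_btwn (show f i < f i + δ by linarith)
      exact ⟨(p, q), hp2.le, hq1.le, hp1, hq2⟩
    choose c hc1 hc2 hc3 hc4 using hchoice
    refine ⟨c, ?_, ?_⟩
    · intro i j hij
      rw [Set.disjoint_left]
      intro y hyi hyj
      simp only [Set.mem_Icc] at hyi hyj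
      have h1 : |y - f i| < δ := by
        rw [abs_sub_lt_iff]
        constructor <;> [linarith [hc2 i, hc4 i, hyi.2]; linarith [hc1 i, hc3 i, hyi.1]]
      have h2 : |y - f j| < δ := by
        rw [abs_sub_lt_iff]
        constructor <;> [linarith [hc2 j, hc4 j, hyj.2]; linarith [hc1 j, hc3 j, hyj.1]]
      have := hδ i j hij
      have : |f i - f j| ≤ |f i - y| + |y - f j| := abs_sub_le _ _ _
      rw [abs_sub_comm (f i) y] at this
      linarith [hδ i j hij]
    · intro i
      exact ⟨f i, ⟨⟨hc1 i, hc2 i⟩, (hfA i).2⟩, (hfA i).1⟩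
  · rintro ⟨c, hdisj, hx⟩
    -- pick a preimage point in each interval
    have hchoice : ∀ i : Fin m, ∃ s : ℝ,
        s ∈ Icc ((c i).1 : ℝ) ((c i).2 : ℝ) ∧ s ∈ Icc a b ∧ γ s = x := by
      intro i
      obtain ⟨s, ⟨hs1, hs2⟩, hs3⟩ := hx i
      exact ⟨s, hs1, hs2, hs3⟩
    choose s hs1 hs2 hs3 using hchoice
    have hsinj : Function.Injective s := by
      intro i j hij
      by_contra hne
      exact (Set.disjoint_left.1 (hdisj hne)) (hs1 i) (hij ▸ hs1 j)
    have hrange : Set.range s ⊆ γ ⁻¹' {x} ∩ Icc a b := by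
      rintro _ ⟨i, rfl⟩
      exact ⟨hs3 i, hs2 i⟩
    calc (m : ℕ∞) = (Set.range s).encard := by
          rw [← Set.image_univ, hsinj.encard_image, Set.encard_univ]
          simp
      _ ≤ _ := Set.encard_le_encard hrange

/-- The multiplicity function is genuinely Borel measurable. -/
private lemma multiplicity_measurable {X : Type*} [MetricSpace X]
    [MeasurableSpace X] [BorelSpace X] (a b : ℝ) (γ : ℝ → X)
    (hγ : ContinuousOn γ (Icc a b)) :
    Measurable (fun x : X => ((γ ⁻¹' {x} ∩ Icc a b).encard : ℕ∞)) := by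
  have hG : ∀ m : ℕ, MeasurableSet {x : X | (m : ℕ∞) ≤ (γ ⁻¹' {x} ∩ Icc a b).encard} := by
    intro m
    rw [multiplicity_superlevel_eq]
    refine MeasurableSet.iUnion fun c => MeasurableSet.iUnion fun _ =>
      MeasurableSet.iInter fun i => ?_
    have hcpt : IsCompact (Icc ((c i).1 : ℝ) ((c i).2 : ℝ) ∩ Icc a b) :=
      (isCompact_Icc.inter isCompact_Icc)
    have : IsCompact (γ '' (Icc ((c i).1 : ℝ) ((c i).2 : ℝ) ∩ Icc a b)) :=
      hcpt.image_of_continuousOn (hγ.mono Set.inter_subset_right)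
    exact this.isClosed.measurableSet
  rw [ENat.measurable_iff]
  intro n
  have : (fun x : X => ((γ ⁻¹' {x} ∩ Icc a b).encard : ℕ∞)) ⁻¹' {(n : ℕ∞)} =
      {x : X | (n : ℕ∞) ≤ (γ ⁻¹' {x} ∩ Icc a b).encard} \
        {x : X | ((n + 1 : ℕ) : ℕ∞) ≤ (γ ⁻¹' {x} ∩ Icc a b).encard} := by
    ext x
    simp only [Set.mem_preimage, Set.mem_singleton_iff, Set.mem_diff, mem_setOf_eq]
    constructor
    · intro h
      refine ⟨h.ge, ?_⟩
      rw [h]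
      exact fun h' => Nat.not_succ_le_self n (by exact_mod_cast h')
    · rintro ⟨h1, h2⟩
      refine le_antisymm ?_ h1
      by_contra h
      push_neg at h
      have : ((n : ℕ∞) + 1) ≤ (γ ⁻¹' {x} ∩ Icc a b).encard := Order.add_one_le_of_lt h
      exact h2 (by exact_mod_cast this)
  rw [this]
  exact (hG n).diff (hG (n + 1))

/-- The multiplicity function `x ↦ #(γ⁻¹(x))` of a continuous path `γ : [a,b] → X`
(with value `∞` when the preimage is infinite) is measurable with respect to the
1-dimensional Hausdorff measure. -/
theorem multiplicity_aemeasurable_hausdorff {X : Type*} [MetricSpace X]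
    [MeasurableSpace X] [BorelSpace X] (a b : ℝ) (γ : ℝ → X)
    (hγ : ContinuousOn γ (Icc a b)) :
    AEMeasurable (fun x : X => ((γ ⁻¹' {x} ∩ Icc a b).encard : ℕ∞) )
      (μH[1] : Measure X) := by
  exact (multiplicity_measurable a b γ hγ).aemeasurable
end

section
/- A connected set hits every sphere around one of its points that it exits: if E is a connected subset of a metric space, y ∈ E, and f(z) = d(y,z), then f(E) is an interval; consequently, if E contains a point at distance ≥ r from y, then H¹(E ∩ \overline{B}(y,r)) ≥ H¹(f(E ∩ \overline{B}(y,r))) = diam f(E ∩ \overline{B}(y,r)) ≥ r. In particular, every connected set E with y ∈ E and diam E ≥ r satisfies H¹(E ∩ \overline{B}(y,r)) ≥ r. -/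
open MeasureTheory Set Metric
open scoped MeasureTheory

/-!
The distance `dist y ·` to a point `y ∈ E` is `1`-Lipschitz, so it maps the connected set `E` onto
an interval containing `0`. If `E` reaches distance `r` from `y`, then `E ∩ closedBall y r` is
mapped onto `[0, r]`, whose `H¹`-measure is `r`, and a `1`-Lipschitz map does not increase `H¹`.
Applying this around each point of `E` bounds `diam E` by `H¹(E)`, which covers the case where `E`
stays inside the ball.
-/

theorem IsPreconnected.Icc_subset_image_dist_inter_closedBall {X : Type*} [PseudoMetricSpace X]
    {E : Set X} (hE : IsPreconnected E) {y z : X} (hy : y ∈ E) (hz : z ∈ E) {r : ℝ}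
    (hr : r ≤ dist y z) : Icc 0 r ⊆ dist y '' (E ∩ closedBall y r) := by
  have hord : OrdConnected (dist y '' E) :=
    (hE.image _ (LipschitzWith.dist_right y).continuous.continuousOn).ordConnected
  intro t ht
  obtain ⟨x, hx, rfl⟩ : t ∈ dist y '' E :=
    hord.out ⟨y, hy, dist_self y⟩ ⟨z, hz, rfl⟩ ⟨ht.1, ht.2.trans hr⟩
  exact ⟨x, ⟨hx, mem_closedBall'.mpr ht.2⟩, rfl⟩

theorem LipschitzWith.ofReal_sub_le_hausdorffMeasure_of_Icc_subset_image {X : Type*}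
    [EMetricSpace X] [MeasurableSpace X] [BorelSpace X] {f : X → ℝ} (hf : LipschitzWith 1 f)
    {s : Set X} {a b : ℝ} (h : Icc a b ⊆ f '' s) : ENNReal.ofReal (b - a) ≤ μH[1] s :=
  calc ENNReal.ofReal (b - a) = μH[1] (Icc a b) := by rw [hausdorffMeasure_real, Real.volume_Icc]
    _ ≤ μH[1] (f '' s) := measure_mono h
    _ ≤ μH[1] s := by simpa using hf.hausdorffMeasure_image_le zero_le_one s

theorem IsPreconnected.ofReal_le_hausdorffMeasure_inter_closedBall {X : Type*} [MetricSpace X]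
    [MeasurableSpace X] [BorelSpace X] {E : Set X} (hE : IsPreconnected E) {y z : X} (hy : y ∈ E)
    (hz : z ∈ E) {r : ℝ} (hr : r ≤ dist y z) :
    ENNReal.ofReal r ≤ μH[1] (E ∩ closedBall y r) := by
  simpa using (LipschitzWith.dist_right y).ofReal_sub_le_hausdorffMeasure_of_Icc_subset_image
    (hE.Icc_subset_image_dist_inter_closedBall hy hz hr)

theorem IsPreconnected.ediam_le_hausdorffMeasure {X : Type*} [MetricSpace X] [MeasurableSpace X]
    [BorelSpace X] {E : Set X} (hE : IsPreconnected E) : ediam E ≤ μH[1] E :=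
  ediam_le fun z hz w hw =>
    calc edist z w = ENNReal.ofReal (dist z w) := edist_dist z w
      _ ≤ μH[1] (E ∩ closedBall z (dist z w)) :=
        hE.ofReal_le_hausdorffMeasure_inter_closedBall hz hw le_rfl
      _ ≤ μH[1] E := measure_mono inter_subset_left

theorem hausdorff_measure_inter_closedBall_ge_general {X : Type*} [MetricSpace X]
    [MeasurableSpace X] [BorelSpace X] (E : Set X) (hE : IsConnected E)
    (y : X) (hy : y ∈ E) (r : ℝ) :
    ((∃ z ∈ E, r ≤ dist y z) →
      ENNReal.ofReal r ≤ (μH[1] : Measure X) (E ∩ closedBall y r)) ∧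
    (ENNReal.ofReal r ≤ EMetric.diam E →
      ENNReal.ofReal r ≤ (μH[1] : Measure X) (E ∩ closedBall y r)) := by
  have hexit : (∃ z ∈ E, r ≤ dist y z) →
      ENNReal.ofReal r ≤ (μH[1] : Measure X) (E ∩ closedBall y r) := fun ⟨z, hz, hr⟩ =>
    hE.isPreconnected.ofReal_le_hausdorffMeasure_inter_closedBall hy hz hr
  refine ⟨hexit, fun hdiam => ?_⟩
  by_cases hfar : ∃ z ∈ E, r ≤ dist y z
  · exact hexit hfar
  · push Not at hfar
    have hEball : E ∩ closedBall y r = E :=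
      inter_eq_left.mpr fun x hx => mem_closedBall'.mpr (hfar x hx).le
    rw [hEball]
    exact hdiam.trans hE.isPreconnected.ediam_le_hausdorffMeasure

/-- A connected set hits every sphere around one of its points that it exits:
if `E` is connected, `y ∈ E`, and `E` contains a point at distance `≥ r` from `y`,
then `H¹(E ∩ closedBall y r) ≥ r`. In particular, the same lower bound holds whenever
`diam E ≥ r`. -/
theorem hausdorff_measure_inter_closedBall_ge {X : Type*} [MetricSpace X]
    [MeasurableSpace X] [BorelSpace X] (E : Set X) (hE : IsConnected E)
    (y : X) (hy : y ∈ E) (r : ℝ) (hr : 0 ≤ r) :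
    ((∃ z ∈ E, r ≤ dist y z) →
      ENNReal.ofReal r ≤ (μH[1] : Measure X) (E ∩ closedBall y r)) ∧
    (ENNReal.ofReal r ≤ EMetric.diam E →
      ENNReal.ofReal r ≤ (μH[1] : Measure X) (E ∩ closedBall y r)) :=
  hausdorff_measure_inter_closedBall_ge_general E hE y hy r
end

section
/- If a closed connected subset E of a space homeomorphic to ℝ² satisfies H¹(E) < ∞, then E is an exhaustion by continua: there exists a sequence of continua (Eₙ) with Eₙ ⊂ E_{n+1} and E = ⋃ₙ Eₙ. -/
/-!
A connected set `E` of finite length is locally connected. By boundary bumping, every component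
of `E ∩ closedBall z r` meeting `ball z (r / 2)` reaches the sphere of radius `r`, hence has
length at least `r / 2`; these components are disjoint and `E` has finite length, so there are
finitely many of them, and the component of `z` is a neighbourhood of `z` in `E`. Consequently
any two points of `E` lie in a common continuum inside `E`, and for a compact exhaustion `(Kₙ)`
of the plane the components of a base point in `E ∩ Kₙ` increase to `E`.
-/

open MeasureTheory Set Function Filter Topology Metric
open scoped MeasureTheory ENNReal

section Topology

variable {X : Type*} [TopologicalSpace X]

theorem IsCompact.connectedComponentIn {K : Set X} (hK : IsCompact K) (x : X) :
    IsCompact (connectedComponentIn K x) := by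
  by_cases hx : x ∈ K
  · rw [connectedComponentIn_eq_image hx]
    have := isCompact_iff_compactSpace.mp hK
    exact isClosed_connectedComponent.isCompact.image continuous_subtype_val
  · rw [connectedComponentIn_eq_empty hx]
    exact isCompact_empty

theorem exists_isClopen_subset_of_connectedComponent_subset [T2Space X] [CompactSpace X]
    {x : X} {U : Set X} (hU : IsOpen U) (h : connectedComponent x ⊆ U) :
    ∃ V, IsClopen V ∧ x ∈ V ∧ V ⊆ U := by
  rw [connectedComponent_eq_iInter_isClopen] at h
  obtain ⟨u, hu⟩ := hU.isClosed_compl.isCompact.elim_finite_subfamily_closed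
    (fun s : {s : Set X // IsClopen s ∧ x ∈ s} ↦ (s : Set X)) (fun s ↦ s.2.1.1)
    (by rwa [← disjoint_iff_inter_eq_empty, disjoint_compl_left_iff_subset])
  refine ⟨⋂ s ∈ u, (s : Set X), isClopen_biInter_finset fun s _ ↦ s.2.1,
    mem_iInter₂.2 fun s _ ↦ s.2.2, ?_⟩
  rwa [← disjoint_compl_left_iff_subset, disjoint_iff_inter_eq_empty]

/-- Boundary bumping theorem. -/
theorem connectedComponentIn_inter_not_subset [T2Space X] {E F V : Set X}
    (hE : IsPreconnected E) (hEF : ¬E ⊆ F) (hK : IsCompact (E ∩ F)) (hV : IsOpen V)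
    (hVF : V ⊆ F) {w : X} (hw : w ∈ E ∩ F) : ¬connectedComponentIn (E ∩ F) w ⊆ V := by
  intro hCV
  have := isCompact_iff_compactSpace.mp hK
  obtain ⟨W, hW, hwW, hWV⟩ := exists_isClopen_subset_of_connectedComponent_subset
    (x := ⟨w, hw⟩) (hV.preimage continuous_subtype_val) fun y hy ↦
      hCV (connectedComponentIn_eq_image hw ▸ mem_image_of_mem _ hy)
  obtain ⟨O, hO, rfl⟩ := isOpen_induced_iff.mp hW.isOpen
  -- `O ∩ (E ∩ F)` is clopen in `E`: closed being compact, open being `E ∩ (O ∩ V)`.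
  have hOK : IsClosed (O ∩ (E ∩ F)) := by
    rw [inter_comm, ← Subtype.image_preimage_coe]
    exact (hW.isClosed.isCompact.image continuous_subtype_val).isClosed
  have hcover : E ⊆ (O ∩ V) ∪ (O ∩ (E ∩ F))ᶜ := fun x hx ↦ by
    by_cases hxO : x ∈ O ∩ (E ∩ F)
    · exact .inl ⟨hxO.1, hWV (a := ⟨x, hxO.2⟩) hxO.1⟩
    · exact .inr hxO
  have hdisj : E ∩ ((O ∩ V) ∩ (O ∩ (E ∩ F))ᶜ) = ∅ :=
    eq_empty_of_forall_notMem fun x ⟨hxE, ⟨hxO, hxV⟩, hx⟩ ↦ hx ⟨hxO, hxE, hVF hxV⟩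
  rcases isPreconnected_iff_subset_of_disjoint.mp hE _ _ (hO.inter hV) hOK.isOpen_compl hcover
    hdisj with hEV | hEO
  · exact hEF fun x hx ↦ hVF (hEV hx).2
  · exact hEO hw.1 ⟨hwW, hw⟩

def JoinedByContinuumIn (E : Set X) (x y : X) : Prop :=
  ∃ T ⊆ E, IsCompact T ∧ IsPreconnected T ∧ x ∈ T ∧ y ∈ T

theorem IsPreconnected.joinedByContinuumIn {E : Set X} (hE : IsPreconnected E)
    (hloc : ∀ z ∈ E, ∃ T ∈ 𝓝[E] z, T ⊆ E ∧ IsCompact T ∧ IsPreconnected T)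
    {x y : X} (hx : x ∈ E) (hy : y ∈ E) : JoinedByContinuumIn E x y := by
  refine hE.induction₂ _ (fun z hz ↦ ?_) (fun x y z _ _ _ ↦ ?_)
    (fun x y _ _ ⟨T, hTE, hTc, hTp, hxT, hyT⟩ ↦ ⟨T, hTE, hTc, hTp, hyT, hxT⟩) hx hy
  · obtain ⟨T, hT, hTE, hTc, hTp⟩ := hloc z hz
    filter_upwards [hT] with y hy
    exact ⟨T, hTE, hTc, hTp, mem_of_mem_nhdsWithin hz hT, hy⟩
  · rintro ⟨S, hSE, hSc, hSp, hxS, hyS⟩ ⟨T, hTE, hTc, hTp, hyT, hzT⟩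
    exact ⟨S ∪ T, union_subset hSE hTE, hSc.union hTc, hSp.union y hyS hyT hTp, .inl hxS,
      .inr hzT⟩

theorem IsConnected.exists_monotone_continua_iUnion_eq [WeaklyLocallyCompactSpace X]
    [SigmaCompactSpace X] {E : Set X} (hE : IsConnected E) (hEc : IsClosed E)
    (hloc : ∀ z ∈ E, ∃ T ∈ 𝓝[E] z, T ⊆ E ∧ IsCompact T ∧ IsPreconnected T) :
    ∃ Eseq : ℕ → Set X, (∀ n, IsCompact (Eseq n)) ∧ (∀ n, IsConnected (Eseq n)) ∧
      (∀ n, Eseq n ⊆ Eseq (n + 1)) ∧ (⋃ n, Eseq n) = E := by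
  obtain ⟨x₀, hx₀⟩ := hE.nonempty
  let K := CompactExhaustion.choice X
  obtain ⟨n₀, hn₀⟩ := K.exists_mem x₀
  have hx₀K (n : ℕ) : x₀ ∈ E ∩ K (n + n₀) := ⟨hx₀, K.subset (Nat.le_add_left _ _) hn₀⟩
  refine ⟨fun n ↦ connectedComponentIn (E ∩ K (n + n₀)) x₀,
    fun n ↦ ((K.isCompact _).inter_left hEc).connectedComponentIn x₀,
    fun n ↦ isConnected_connectedComponentIn_iff.mpr (hx₀K n),
    fun n ↦ connectedComponentIn_mono x₀ (inter_subset_inter_right E (K.subset (by omega))),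
    subset_antisymm (iUnion_subset fun n ↦ (connectedComponentIn_subset _ _).trans
      inter_subset_left) fun y hy ↦ ?_⟩
  obtain ⟨T, hTE, hTc, hTp, hx₀T, hyT⟩ := hE.isPreconnected.joinedByContinuumIn hloc hx₀ hy
  obtain ⟨m, hm⟩ := K.exists_superset_of_isCompact hTc
  exact mem_iUnion.2 ⟨m, hTp.subset_connectedComponentIn hx₀T
    (subset_inter hTE (hm.trans (K.subset (Nat.le_add_right _ _)))) hyT⟩

end Topology

section HausdorffMeasure

variable {X : Type*} [MetricSpace X] [MeasurableSpace X] [BorelSpace X]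

theorem IsPreconnected.edist_le_hausdorffMeasure {s : Set X} (hs : IsPreconnected s)
    {a b : X} (ha : a ∈ s) (hb : b ∈ s) : edist a b ≤ (μH[1] : Measure X) s := by
  have hlip : LipschitzWith 1 (dist a) := LipschitzWith.dist_right a
  have hIcc : Icc 0 (dist a b) ⊆ dist a '' s :=
    (hs.image _ hlip.continuous.continuousOn).Icc_subset ⟨a, ha, dist_self a⟩ ⟨b, hb, rfl⟩
  calc edist a b = (μH[1] : Measure ℝ) (Icc 0 (dist a b)) := by
        rw [hausdorffMeasure_real, Real.volume_Icc, edist_dist, sub_zero]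
    _ ≤ (μH[1] : Measure ℝ) (dist a '' s) := measure_mono hIcc
    _ ≤ 1 ^ (1 : ℝ) * (μH[1] : Measure X) s := hlip.hausdorffMeasure_image_le zero_le_one s
    _ = (μH[1] : Measure X) s := by simp

theorem finite_image_connectedComponentIn_of_le_measure (μ : Measure X) {K S : Set X}
    (hK : IsCompact K) (hμK : μ K ≠ ∞) {ε : ℝ≥0∞} (hε : ε ≠ 0)
    (hS : ∀ w ∈ S, ε ≤ μ (connectedComponentIn K w)) :
    (connectedComponentIn K '' S).Finite := by
  set 𝒞 := connectedComponentIn K '' S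
  have hT𝒞 : ∀ T ∈ 𝒞, ∀ p ∈ T, T = connectedComponentIn K p := by
    rintro _ ⟨x, -, rfl⟩ p hp
    exact connectedComponentIn_eq hp
  have hdisj : Pairwise (Disjoint on ((↑) : 𝒞 → Set X)) := fun T₁ T₂ hne ↦
    disjoint_left.2 fun p hp₁ hp₂ ↦
      hne (Subtype.ext ((hT𝒞 _ T₁.2 p hp₁).trans (hT𝒞 _ T₂.2 p hp₂).symm))
  have hmeas (T : 𝒞) : MeasurableSet (T : Set X) := by
    obtain ⟨_, w, -, rfl⟩ := T
    exact (hK.connectedComponentIn w).isClosed.measurableSet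
  have hsub : (⋃ T : 𝒞, (T : Set X)) ⊆ K :=
    iUnion_subset fun ⟨_, w, _, hw⟩ ↦ hw ▸ connectedComponentIn_subset K w
  have hfin := Measure.finite_const_le_meas_of_disjoint_iUnion μ (pos_iff_ne_zero.2 hε) hmeas
    hdisj (ne_top_of_le_ne_top hμK (measure_mono hsub))
  have huniv : {T : 𝒞 | ε ≤ μ T} = univ :=
    eq_univ_of_forall fun ⟨_, w, hw, hT⟩ ↦ hT ▸ hS w hw
  rw [huniv] at hfin
  exact finite_coe_iff.mp (finite_univ_iff.mp hfin)

theorem ofReal_le_hausdorffMeasure_connectedComponentIn {E : Set X}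
    (hE : IsPreconnected E) {z w : X} {r : ℝ} (hEr : ¬E ⊆ closedBall z r)
    (hK : IsCompact (E ∩ closedBall z r)) (hw : w ∈ E) (hwz : dist w z < r / 2) :
    ENNReal.ofReal (r / 2) ≤
      (μH[1] : Measure X) (connectedComponentIn (E ∩ closedBall z r) w) := by
  have hwK : w ∈ E ∩ closedBall z r :=
    ⟨hw, mem_closedBall.2 (by linarith [dist_nonneg (x := w) (y := z)])⟩
  obtain ⟨s, hsT, hs⟩ := not_subset.1
    (connectedComponentIn_inter_not_subset hE hEr hK isOpen_ball ball_subset_closedBall hwK)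
  calc ENNReal.ofReal (r / 2) ≤ edist w s := by
        rw [edist_dist]
        refine ENNReal.ofReal_le_ofReal ?_
        rw [mem_ball, not_lt] at hs
        linarith [dist_triangle s w z, dist_comm s w]
    _ ≤ _ := isPreconnected_connectedComponentIn.edist_le_hausdorffMeasure
        (mem_connectedComponentIn hwK) hsT

theorem connectedComponentIn_closedBall_mem_nhdsWithin {E : Set X}
    (hE : IsPreconnected E) (hEfin : (μH[1] : Measure X) E ≠ ∞) {z : X} (hz : z ∈ E) {r : ℝ}
    (hr : 0 < r) (hK : IsCompact (E ∩ closedBall z r)) :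
    connectedComponentIn (E ∩ closedBall z r) z ∈ 𝓝[E] z := by
  set K := E ∩ closedBall z r
  by_cases hEr : E ⊆ closedBall z r
  · rw [show K = E from inter_eq_left.2 hEr, hE.connectedComponentIn hz]
    exact self_mem_nhdsWithin
  set S := (E ∩ ball z (r / 2)) \ connectedComponentIn K z
  have hSK : S ⊆ K := fun w hw ↦
    ⟨hw.1.1, ball_subset_closedBall (ball_subset_ball (half_le_self hr.le) hw.1.2)⟩
  have h𝒞 : (connectedComponentIn K '' S).Finite :=
    finite_image_connectedComponentIn_of_le_measure _ hK
      (ne_top_of_le_ne_top hEfin (measure_mono inter_subset_left))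
      (ENNReal.ofReal_pos.2 (half_pos hr)).ne' fun w hw ↦
        ofReal_le_hausdorffMeasure_connectedComponentIn hE hEr hK hw.1.1 (mem_ball.1 hw.1.2)
  have hz𝒞 : z ∉ ⋃ T ∈ connectedComponentIn K '' S, T := fun hz ↦ by
    obtain ⟨_, ⟨w, hw, rfl⟩, hzw⟩ := mem_iUnion₂.1 hz
    exact hw.2 (connectedComponentIn_eq hzw ▸ mem_connectedComponentIn (hSK hw))
  obtain ⟨ε, hε, hεS⟩ := isOpen_iff.mp (h𝒞.isClosed_biUnion fun T ⟨w, _, hT⟩ ↦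
    hT ▸ (hK.connectedComponentIn w).isClosed).isOpen_compl z hz𝒞
  refine mem_nhdsWithin_iff.2 ⟨min ε (r / 2), lt_min hε (half_pos hr), fun w ⟨hwb, hwE⟩ ↦ ?_⟩
  by_contra hwz
  have hwS : w ∈ S := ⟨⟨hwE, ball_subset_ball (min_le_right _ _) hwb⟩, hwz⟩
  exact hεS (ball_subset_ball (min_le_left _ _) hwb)
    (mem_biUnion (mem_image_of_mem _ hwS) (mem_connectedComponentIn (hSK hwS)))

theorem IsPreconnected.exists_continuum_mem_nhdsWithin [WeaklyLocallyCompactSpace X]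
    {E : Set X} (hE : IsPreconnected E) (hEc : IsClosed E)
    (hEfin : (μH[1] : Measure X) E ≠ ∞) {z : X} (hz : z ∈ E) :
    ∃ T ∈ 𝓝[E] z, T ⊆ E ∧ IsCompact T ∧ IsPreconnected T := by
  obtain ⟨r, hr, hrc⟩ := exists_isCompact_closedBall z
  have hK : IsCompact (E ∩ closedBall z r) := hrc.inter_left hEc
  exact ⟨_, connectedComponentIn_closedBall_mem_nhdsWithin hE hEfin hz hr hK,
    (connectedComponentIn_subset _ _).trans inter_subset_left, hK.connectedComponentIn z,
    isPreconnected_connectedComponentIn⟩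

end HausdorffMeasure

/-- A closed connected subset of finite `H¹`-measure in a metric space homeomorphic to `ℝ²`
can be exhausted by an increasing sequence of continua. -/
theorem exhaustion_by_continua {U : Type*} [MetricSpace U] [MeasurableSpace U] [BorelSpace U]
    (hU : Nonempty (U ≃ₜ (ℝ × ℝ))) (E : Set U) (hEclosed : IsClosed E)
    (hEconn : IsConnected E) (hEfin : (μH[1] : Measure U) E < ⊤) :
    ∃ Eseq : ℕ → Set U, (∀ n, IsCompact (Eseq n)) ∧ (∀ n, IsConnected (Eseq n)) ∧
      (∀ n, Eseq n ⊆ Eseq (n + 1)) ∧ (⋃ n, Eseq n) = E := by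
  obtain ⟨e⟩ := hU
  have : LocallyCompactSpace U := e.locallyCompactSpace_iff.mpr inferInstance
  have : SigmaCompactSpace U := e.isClosedEmbedding.sigmaCompactSpace
  exact hEconn.exists_monotone_continua_iUnion_eq hEclosed fun z hz ↦
    hEconn.isPreconnected.exists_continuum_mem_nhdsWithin hEclosed hEfin.ne hz
end

section
/- Uniform limits preserve weak monotonicity: let V and U be metric spaces with V locally compact, f : V → U a uniform limit of homeomorphisms fₙ : V → U, and u : U → ℝ a continuous monotone function (i.e., for every open set Ω compactly contained in the domain, sup_Ω u ≤ sup_{∂Ω} u < ∞ and inf_Ω u ≥ inf_{∂Ω} u > −∞). Then v := u ∘ f is monotone: for every open Ω compactly contained in V, sup_{x∈Ω} v(x) = sup_{x∈∂Ω} v(x) and inf_{x∈Ω} v(x) = inf_{x∈∂Ω} v(x). -/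
open Set Filter

/-- `u` is monotone: on every open set compactly contained in the space (with nonempty
boundary), the values of `u` are controlled by its boundary values. -/
def IsMonotoneFn {X : Type*} [TopologicalSpace X] (u : X → ℝ) : Prop :=
  ∀ Ω : Set X, IsOpen Ω → IsCompact (closure Ω) → Ω.Nonempty → (frontier Ω).Nonempty →
    ∀ x ∈ Ω, u x ≤ sSup (u '' frontier Ω) ∧ sInf (u '' frontier Ω) ≤ u x

/-!
Each `u ∘ fₙ` is monotone, because a homeomorphism carries an open set with compact closure,
its closure and its frontier to sets of the same kind. Since `u` is uniformly continuous near
the compact set `f '' K`, `u ∘ fₙ → u ∘ f` uniformly on every compact `K`, and the boundary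
inequalities at a point `x ∈ Ω` pass to the limit on the compact set `insert x (frontier Ω)`.
For the continuous function `v = u ∘ f`, `sup_Ω v ≤ sup_{∂Ω} v` is then an equality because
`∂Ω ⊆ closure Ω`, so the boundary values of `v` are limits of its values in `Ω`.
-/

theorem Continuous.comp_tendstoUniformlyOn_of_isCompact {ι α β γ : Type*} [UniformSpace β]
    [UniformSpace γ] {l : Filter ι} {F : ι → α → β} {f : α → β} {K : Set α} {g : β → γ}
    (hg : Continuous g) (hK : IsCompact (f '' K)) (h : TendstoUniformlyOn F f l K) :
    TendstoUniformlyOn (fun i x => g (F i x)) (fun x => g (f x)) l K := by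
  intro r hr
  filter_upwards [h _ (hK.uniformContinuousAt_of_continuousAt g (fun b _ => hg.continuousAt) hr)]
    with i hi x hx
  exact hi x hx (mem_image_of_mem f hx)

theorem Real.sSup_image_neg {α : Type*} (g : α → ℝ) (s : Set α) :
    sSup ((fun x => -g x) '' s) = -sInf (g '' s) := by
  rw [← Real.sSup_neg, ← image_neg_eq_neg, image_image]

section UniformLimit

variable {ι α : Type*} {l : Filter ι} [l.NeBot] {G : ι → α → ℝ} {g : α → ℝ} {K : Set α} {x : α}

theorem le_csSup_image_of_tendstoUniformlyOn (hK : K.Nonempty) (hg : BddAbove (g '' K))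
    (hG : ∀ i, G i x ≤ sSup (G i '' K)) (hlim : TendstoUniformlyOn G g l (insert x K)) :
    g x ≤ sSup (g '' K) := by
  refine le_of_forall_pos_lt_add fun ε hε => ?_
  obtain ⟨i, hi⟩ := (Metric.tendstoUniformlyOn_iff.mp hlim (ε / 2) (half_pos hε)).exists
  have close : ∀ z ∈ insert x K, |g z - G i z| < ε / 2 := fun z hz => by
    simpa only [Real.dist_eq] using hi z hz
  have hsup : sSup (G i '' K) ≤ sSup (g '' K) + ε / 2 := by
    refine csSup_le (hK.image _) (forall_mem_image.2 fun z hz => ?_)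
    have := le_csSup hg (mem_image_of_mem g hz)
    linarith [(abs_sub_lt_iff.mp (close z (mem_insert_of_mem x hz))).2]
  linarith [(abs_sub_lt_iff.mp (close x (mem_insert x K))).1, hG i]

theorem csInf_image_le_of_tendstoUniformlyOn (hK : K.Nonempty) (hg : BddBelow (g '' K))
    (hG : ∀ i, sInf (G i '' K) ≤ G i x) (hlim : TendstoUniformlyOn G g l (insert x K)) :
    sInf (g '' K) ≤ g x := by
  have hg' : BddAbove ((fun z => -g z) '' K) := by
    rw [← image_image (fun y => -y), image_neg_eq_neg]
    exact hg.neg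
  have := le_csSup_image_of_tendstoUniformlyOn (G := fun i z => -G i z) hK hg'
    (fun i => by rw [Real.sSup_image_neg]; exact neg_le_neg (hG i))
    (uniformContinuous_neg.comp_tendstoUniformlyOn hlim)
  rw [Real.sSup_image_neg] at this
  linarith

end UniformLimit

theorem csSup_image_eq_csSup_image_frontier {X β : Type*} [TopologicalSpace X]
    [ConditionallyCompleteLinearOrder β] [TopologicalSpace β] [OrderTopology β] {v : X → β}
    {Ω : Set X} (hv : ContinuousOn v (closure Ω)) (hK : IsCompact (closure Ω))
    (hfne : (frontier Ω).Nonempty) (h : ∀ x ∈ Ω, v x ≤ sSup (v '' frontier Ω)) :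
    sSup (v '' Ω) = sSup (v '' frontier Ω) := by
  have hne : Ω.Nonempty := closure_nonempty_iff.mp (hfne.mono frontier_subset_closure)
  have : Nonempty β := ⟨v hne.some⟩
  have hbdd : BddAbove (v '' Ω) := (hK.bddAbove_image hv).mono (image_mono subset_closure)
  refine le_antisymm (csSup_le (hne.image v) (forall_mem_image.2 h))
    (csSup_le (hfne.image v) (forall_mem_image.2 fun z hz => ?_))
  have hz' : v z ∈ closure (v '' Ω) :=
    hv.image_closure (mem_image_of_mem v (frontier_subset_closure hz))
  exact closure_minimal (fun a ha => le_csSup hbdd ha) isClosed_Iic hz'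

theorem csInf_image_eq_csInf_image_frontier {X β : Type*} [TopologicalSpace X]
    [ConditionallyCompleteLinearOrder β] [TopologicalSpace β] [OrderTopology β] {v : X → β}
    {Ω : Set X} (hv : ContinuousOn v (closure Ω)) (hK : IsCompact (closure Ω))
    (hfne : (frontier Ω).Nonempty) (h : ∀ x ∈ Ω, sInf (v '' frontier Ω) ≤ v x) :
    sInf (v '' Ω) = sInf (v '' frontier Ω) :=
  csSup_image_eq_csSup_image_frontier (β := βᵒᵈ) hv hK hfne h

namespace IsMonotoneFn

variable {X : Type*} [TopologicalSpace X]

theorem comp_homeomorph {Y : Type*} [TopologicalSpace Y] {u : Y → ℝ} (hu : IsMonotoneFn u)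
    (h : X ≃ₜ Y) : IsMonotoneFn (u ∘ h) := by
  intro Ω hΩ hK hne hfne x hx
  have hK' : IsCompact (closure (h '' Ω)) := by
    rw [← h.image_closure]
    exact hK.image h.continuous
  have hfne' : (frontier (h '' Ω)).Nonempty := by
    rw [← h.image_frontier]
    exact hfne.image h
  have := hu (h '' Ω) (h.isOpenMap Ω hΩ) hK' (hne.image h) hfne' (h x) (mem_image_of_mem h hx)
  rwa [← h.image_frontier, image_image] at this

theorem of_tendstoUniformlyOn {ι : Type*} {l : Filter ι} [l.NeBot] {G : ι → X → ℝ} {g : X → ℝ}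
    (hG : ∀ i, IsMonotoneFn (G i)) (hg : Continuous g)
    (hlim : ∀ K, IsCompact K → TendstoUniformlyOn G g l K) : IsMonotoneFn g := by
  intro Ω hΩ hK hne hfne x hx
  have hC : IsCompact (frontier Ω) :=
    hK.of_isClosed_subset isClosed_frontier frontier_subset_closure
  have hlim' := hlim _ (hC.insert x)
  exact ⟨le_csSup_image_of_tendstoUniformlyOn hfne (hC.bddAbove_image hg.continuousOn)
      (fun i => (hG i Ω hΩ hK hne hfne x hx).1) hlim',
    csInf_image_le_of_tendstoUniformlyOn hfne (hC.bddBelow_image hg.continuousOn)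
      (fun i => (hG i Ω hΩ hK hne hfne x hx).2) hlim'⟩

end IsMonotoneFn

theorem monotone_of_uniform_limit_general {V U : Type*} [MetricSpace V] [MetricSpace U]
    (fn : ℕ → V ≃ₜ U) (f : V → U)
    (hconv : TendstoUniformly (fun n x => fn n x) f atTop)
    (u : U → ℝ) (hu : Continuous u) (hmono : IsMonotoneFn u) :
    ∀ Ω : Set V, IsOpen Ω → IsCompact (closure Ω) → Ω.Nonempty → (frontier Ω).Nonempty →
      sSup ((u ∘ f) '' Ω) = sSup ((u ∘ f) '' frontier Ω) ∧
      sInf ((u ∘ f) '' Ω) = sInf ((u ∘ f) '' frontier Ω) := by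
  have hf : Continuous f := hconv.continuous (.of_forall fun n => (fn n).continuous)
  have hv : IsMonotoneFn (u ∘ f) :=
    IsMonotoneFn.of_tendstoUniformlyOn (fun n => hmono.comp_homeomorph (fn n)) (hu.comp hf)
      fun K hK => hu.comp_tendstoUniformlyOn_of_isCompact (hK.image hf) hconv.tendstoUniformlyOn
  intro Ω hΩ hK hne hfne
  have hbounds := fun x hx => hv Ω hΩ hK hne hfne x hx
  exact ⟨csSup_image_eq_csSup_image_frontier (hu.comp hf).continuousOn hK hfne
      fun x hx => (hbounds x hx).1,
    csInf_image_eq_csInf_image_frontier (hu.comp hf).continuousOn hK hfne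
      fun x hx => (hbounds x hx).2⟩

/-- Uniform limits of homeomorphisms preserve monotonicity: if `f` is a uniform limit
of homeomorphisms `fₙ : V → U` and `u : U → ℝ` is continuous and monotone, then
`v = u ∘ f` is monotone. -/
theorem monotone_of_uniform_limit {V U : Type*} [MetricSpace V] [MetricSpace U]
    [LocallyCompactSpace V] (fn : ℕ → V ≃ₜ U) (f : V → U)
    (hconv : TendstoUniformly (fun n x => fn n x) f atTop)
    (u : U → ℝ) (hu : Continuous u) (hmono : IsMonotoneFn u) :
    ∀ Ω : Set V, IsOpen Ω → IsCompact (closure Ω) → Ω.Nonempty → (frontier Ω).Nonempty →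
      sSup ((u ∘ f) '' Ω) = sSup ((u ∘ f) '' frontier Ω) ∧
      sInf ((u ∘ f) '' Ω) = sInf ((u ∘ f) '' frontier Ω) :=
  monotone_of_uniform_limit_general fn f hconv u hu hmono
end

section
/- Failure of continuity of weakly monotone Sobolev functions for p < 2: the function u : 𝔻 → ℝ on the unit disk defined by u(x) = x₁ + x₁/|x| for x ≠ 0 and u(0) = 0 is weakly monotone, discontinuous at the origin, and its gradient (defined off the origin) is p-integrable on 𝔻 for every 1 ≤ p < 2. -/
/-!
On each horizontal line `x₂ = b` the function `u = x₁ + x₁ / √(x₁² + b²)` is nondecreasing in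
`x₁`. A horizontal ray from a point of `V` leaves the disk, so by connectedness it meets `∂V`;
following it to the right (left) gives a boundary point where `u` is at least (at most) its
value at the starting point. Along the positive `x₁`-axis `u = x₁ + 1 → 1 ≠ u 0`. Finally
`|∇u| ≤ 3 / |x|` on the disk, and `|x|⁻ᵖ` is integrable near the origin of `ℝ²` for `p < 2`.
-/

open Set Metric MeasureTheory Filter Topology

theorem IsPreconnected.inter_frontier_nonempty {X : Type*} [TopologicalSpace X] {s t : Set X}
    (hs : IsPreconnected s) (hst : (s ∩ t).Nonempty) (hst' : (s \ t).Nonempty) :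
    (s ∩ frontier t).Nonempty := by
  by_contra h
  have hcover : s ⊆ interior t ∪ interior tᶜ := fun z hz => by
    by_cases hzt : z ∈ closure t
    · exact Or.inl (by_contra fun hzi => h ⟨z, hz, hzt, hzi⟩)
    · exact Or.inr (interior_compl (s := t) ▸ hzt)
  rcases hs.subset_or_subset isOpen_interior isOpen_interior
      (disjoint_compl_right.mono interior_subset interior_subset) hcover with hsub | hsub
  · obtain ⟨z, hz, hzt⟩ := hst'
    exact hzt (interior_subset (hsub hz))
  · obtain ⟨z, hz, hzt⟩ := hst
    exact interior_subset (hsub hz) hzt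

theorem Real.monotone_div_sqrt_sq_add_sq (b : ℝ) :
    Monotone fun a : ℝ => a / √(a ^ 2 + b ^ 2) := by
  set g : ℝ → ℝ := fun a => a / √(a ^ 2 + b ^ 2)
  have hg_neg (a : ℝ) : g (-a) = -g a := by simp [g, neg_div]
  have hg_nonneg : MonotoneOn g (Ici 0) := by
    intro a ha c hc hac
    rcases (mem_Ici.1 ha).eq_or_lt with rfl | ha
    · simp only [g, zero_div]
      exact div_nonneg hc (Real.sqrt_nonneg _)
    have hpos (d : ℝ) (hd : 0 < d) : 0 < √(d ^ 2 + b ^ 2) :=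
      Real.sqrt_pos.2 (add_pos_of_pos_of_nonneg (pow_pos hd 2) (sq_nonneg b))
    rw [div_le_div_iff₀ (hpos a ha) (hpos c (ha.trans_le hac)),
      ← pow_le_pow_iff_left₀ (by positivity) (mul_nonneg hc (Real.sqrt_nonneg _)) two_ne_zero,
      mul_pow, mul_pow, Real.sq_sqrt (by positivity), Real.sq_sqrt (by positivity)]
    nlinarith [mul_le_mul_of_nonneg_right (pow_le_pow_left₀ ha.le hac 2) (sq_nonneg b)]
  refine MonotoneOn.Iic_union_Ici (fun a ha c hc hac => ?_) hg_nonneg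
  have := hg_nonneg (mem_Ici.2 (neg_nonneg.2 hc)) (mem_Ici.2 (neg_nonneg.2 (hac.trans hc)))
    (neg_le_neg hac)
  rwa [hg_neg, hg_neg, neg_le_neg_iff] at this

theorem Bornology.IsBounded.exists_add_smul_mem_frontier {E : Type*} [NormedAddCommGroup E]
    [NormedSpace ℝ E] {V : Set E} (hV : Bornology.IsBounded V) {x v : E} (hx : x ∈ V)
    (hv : v ≠ 0) : ∃ t : ℝ, 0 ≤ t ∧ x + t • v ∈ frontier V := by
  obtain ⟨R, hR⟩ := hV.subset_closedBall x
  have hR0 : 0 ≤ R := dist_nonneg.trans (mem_closedBall.1 (hR hx))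
  set s := (R + 1) / ‖v‖
  have hs : 0 ≤ s := by positivity
  have hy : x + s • v ∉ V := fun hy => by
    have := mem_closedBall.1 (hR hy)
    rw [dist_self_add_left, norm_smul, Real.norm_of_nonneg hs,
      div_mul_cancel₀ _ (norm_ne_zero_iff.2 hv)] at this
    linarith
  obtain ⟨z, hz, hzV⟩ := (convex_segment x (x + s • v)).isPreconnected.inter_frontier_nonempty
    ⟨x, left_mem_segment ℝ _ _, hx⟩ ⟨_, right_mem_segment ℝ _ _, hy⟩
  rw [segment_eq_image'] at hz
  obtain ⟨θ, hθ, rfl⟩ := hz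
  refine ⟨θ * s, mul_nonneg hθ.1 hs, ?_⟩
  simpa [mul_smul] using hzV

theorem exists_hasFDerivAt_div_norm_le {E : Type*} [NormedAddCommGroup E] [NormedSpace ℝ E]
    (L : E →L[ℝ] ℝ) {x : E} (hx : x ≠ 0) (hd : DifferentiableAt ℝ (‖·‖) x) :
    ∃ f' : E →L[ℝ] ℝ, HasFDerivAt (fun y => L y / ‖y‖) f' x ∧ ‖f'‖ ≤ 2 * ‖L‖ / ‖x‖ := by
  have hx₀ : 0 < ‖x‖ := norm_pos_iff.2 hx
  set N := fderiv ℝ (‖·‖) x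
  have hN : ‖N‖ ≤ 1 := by
    simpa using hd.hasFDerivAt.le_of_lipschitz lipschitzWith_one_norm
  have hinv : HasFDerivAt (fun y : E => ‖y‖⁻¹) (-(‖x‖ ^ 2)⁻¹ • N) x :=
    (hasDerivAt_inv hx₀.ne').comp_hasFDerivAt x hd.hasFDerivAt
  refine ⟨‖x‖⁻¹ • L - (L x / ‖x‖ ^ 2) • N, ?_, ?_⟩
  · refine ((L.hasFDerivAt.fun_mul hinv).congr_fderiv ?_).congr_of_eventuallyEq
      (Eventually.of_forall fun y => div_eq_mul_inv _ _)
    ext y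
    simp
    ring
  calc ‖‖x‖⁻¹ • L - (L x / ‖x‖ ^ 2) • N‖
      ≤ ‖x‖⁻¹ * ‖L‖ + ‖L‖ * ‖x‖ / ‖x‖ ^ 2 * 1 := by
        refine (norm_sub_le _ _).trans (add_le_add ?_ ?_)
        · rw [norm_smul, norm_inv, norm_norm]
        · rw [norm_smul, norm_div, norm_pow, norm_norm]
          gcongr
          exact L.le_opNorm x
    _ = 2 * ‖L‖ / ‖x‖ := by field_simp; ring

theorem lintegral_ball_rpow_lt_top_of_norm_le_div_norm {E F : Type*} [NormedAddCommGroup E]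
    [NormedSpace ℝ E] [FiniteDimensional ℝ E] [MeasurableSpace E] [BorelSpace E]
    [NormedAddCommGroup F] {μ : Measure E} [μ.IsAddHaarMeasure] {g : E → F}
    (hg : AEStronglyMeasurable g μ) {C r p : ℝ} (hC : 0 ≤ C)
    (hbound : ∀ x ∈ ball 0 r, x ≠ 0 → ‖g x‖ ≤ C / ‖x‖) (hp : 0 ≤ p)
    (hpd : p < Module.finrank ℝ E) :
    ∫⁻ x in ball 0 r, ENNReal.ofReal (‖g x‖ ^ p) ∂μ < ⊤ := by
  have hd : 1 ≤ Module.finrank ℝ E := by exact_mod_cast (hp.trans_lt hpd)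
  have : Nontrivial E := Module.nontrivial_of_finrank_pos (R := ℝ) hd
  refine Integrable.lintegral_lt_top (integrableOn_ball_of_norm_le_rpow hd hpd (C := C ^ p) ?_
    (hg.norm.aemeasurable.pow_const p).aestronglyMeasurable)
  have hne : ∀ᵐ x ∂μ.restrict (ball 0 r), x ≠ 0 := ae_restrict_of_ae (by simp [ae_iff])
  filter_upwards [hne, ae_restrict_mem measurableSet_ball] with x hx hxr
  rw [Real.norm_of_nonneg (by positivity), Real.rpow_neg (norm_nonneg x), ← div_eq_mul_inv,
    ← Real.div_rpow hC (norm_nonneg x)]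
  exact Real.rpow_le_rpow (norm_nonneg _) (hbound x hxr hx) hp

local notation "ℝ²" => EuclideanSpace ℝ (Fin 2)

/-- `x₁ + cos θ` in polar coordinates (`x₁ = x 0`); Lean's `0 / 0 = 0` makes it vanish at the
origin. -/
noncomputable def coordAddCos (x : ℝ²) : ℝ := x 0 + x 0 / ‖x‖

theorem EuclideanSpace.norm_eq_sqrt_fin_two (x : ℝ²) : ‖x‖ = √(x 0 ^ 2 + x 1 ^ 2) := by
  simp [EuclideanSpace.norm_eq, Fin.sum_univ_two]

theorem abs_coordAddCos_le (x : ℝ²) : |coordAddCos x| ≤ ‖x‖ + 1 := by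
  have hx : |x 0| ≤ ‖x‖ := by simpa using PiLp.norm_apply_le x 0
  calc |coordAddCos x| ≤ |x 0| + |x 0 / ‖x‖| := abs_add_le _ _
    _ ≤ ‖x‖ + 1 := by
        rw [abs_div, abs_norm]
        exact add_le_add hx (div_le_one_of_le₀ hx (norm_nonneg x))

theorem coordAddCos_le_add_smul_single (x : ℝ²) {t : ℝ} (ht : 0 ≤ t) :
    coordAddCos x ≤ coordAddCos (x + t • EuclideanSpace.single 0 1) := by
  have hx : x 0 ≤ x 0 + t := le_add_of_nonneg_right ht
  simp only [coordAddCos, EuclideanSpace.norm_eq_sqrt_fin_two]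
  simpa using add_le_add hx (Real.monotone_div_sqrt_sq_add_sq (x 1) hx)

theorem coordAddCos_weaklyMonotone {V : Set ℝ²} (hV : closure V ⊆ ball 0 1) :
    BddAbove (coordAddCos '' frontier V) ∧ BddBelow (coordAddCos '' frontier V) ∧
      ∀ x ∈ V, coordAddCos x ≤ sSup (coordAddCos '' frontier V) ∧
        sInf (coordAddCos '' frontier V) ≤ coordAddCos x := by
  have hbound : ∀ y ∈ coordAddCos '' frontier V, |y| ≤ 2 := by
    rintro _ ⟨z, hz, rfl⟩
    have := mem_ball_zero_iff.1 (hV (frontier_subset_closure hz))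
    linarith [abs_coordAddCos_le z]
  have hbdd : BddAbove (coordAddCos '' frontier V) :=
    ⟨2, fun y hy => (abs_le.1 (hbound y hy)).2⟩
  have hbdd' : BddBelow (coordAddCos '' frontier V) :=
    ⟨-2, fun y hy => (abs_le.1 (hbound y hy)).1⟩
  have hVb : Bornology.IsBounded V := isBounded_ball.subset (subset_closure.trans hV)
  set e : ℝ² := EuclideanSpace.single 0 1
  have he : e ≠ 0 := by simp [e]
  refine ⟨hbdd, hbdd', fun x hx => ⟨?_, ?_⟩⟩
  · obtain ⟨t, ht, hfr⟩ := hVb.exists_add_smul_mem_frontier hx he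
    exact (coordAddCos_le_add_smul_single x ht).trans (le_csSup hbdd ⟨_, hfr, rfl⟩)
  · obtain ⟨t, ht, hfr⟩ := hVb.exists_add_smul_mem_frontier hx (neg_ne_zero.2 he)
    refine (csInf_le hbdd' ⟨_, hfr, rfl⟩).trans ?_
    have := coordAddCos_le_add_smul_single (x - t • e) ht
    rwa [sub_add_cancel, sub_eq_add_neg, ← smul_neg] at this

theorem coordAddCos_smul_single {t : ℝ} (ht : 0 < t) :
    coordAddCos (t • EuclideanSpace.single 0 1) = t + 1 := by
  simp [coordAddCos, norm_smul, abs_of_pos ht, ht.ne']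

theorem not_continuousAt_coordAddCos : ¬ ContinuousAt coordAddCos 0 := by
  intro h
  set e : ℝ² := EuclideanSpace.single 0 1
  have hline : Tendsto (fun t : ℝ => t • e) (𝓝[>] 0) (𝓝 0) := tendsto_nhdsWithin_of_tendsto_nhds
    ((continuous_id.smul continuous_const).tendsto' 0 0 (zero_smul ℝ e))
  have h₀ : Tendsto (fun t : ℝ => t + 1) (𝓝[>] 0) (𝓝 (coordAddCos 0)) :=
    (h.tendsto.comp hline).congr'
      (eventually_nhdsWithin_of_forall fun _ ht => coordAddCos_smul_single ht)
  have h₁ : Tendsto (fun t : ℝ => t + 1) (𝓝[>] 0) (𝓝 1) :=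
    tendsto_nhdsWithin_of_tendsto_nhds ((continuous_add_const 1).tendsto' 0 1 (zero_add 1))
  simpa [coordAddCos] using tendsto_nhds_unique h₀ h₁

theorem norm_fderiv_coordAddCos_le {x : ℝ²} (hx : x ≠ 0) (hx₁ : ‖x‖ ≤ 1) :
    ‖fderiv ℝ coordAddCos x‖ ≤ 3 / ‖x‖ := by
  set L : ℝ² →L[ℝ] ℝ := EuclideanSpace.proj 0
  have hL : ‖L‖ ≤ 1 := L.opNorm_le_bound zero_le_one fun y => by
    simpa [L] using PiLp.norm_apply_le y 0
  obtain ⟨f', hf', hf'_le⟩ := exists_hasFDerivAt_div_norm_le L hx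
    ((contDiffAt_norm ℝ hx).differentiableAt one_ne_zero)
  have hx₀ : 0 < ‖x‖ := norm_pos_iff.2 hx
  have hu : HasFDerivAt coordAddCos (L + f') x := L.hasFDerivAt.fun_add hf'
  rw [hu.fderiv]
  calc ‖L + f'‖ ≤ 1 / ‖x‖ + 2 * 1 / ‖x‖ := by
        refine (norm_add_le _ _).trans (add_le_add ?_ (hf'_le.trans ?_))
        · exact hL.trans ((one_le_div hx₀).2 hx₁)
        · gcongr
    _ = 3 / ‖x‖ := by ring

/-- The function `u(x) = x₁ + x₁/|x|` (with `u(0) = 0`) on the unit disk is weakly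
monotone and discontinuous at the origin, and its gradient is `p`-integrable for all
`1 ≤ p < 2`. -/
theorem weakly_monotone_discontinuous_example
    (u : EuclideanSpace ℝ (Fin 2) → ℝ)
    (hu : ∀ x : EuclideanSpace ℝ (Fin 2), x ≠ 0 → u x = x 0 + x 0 / ‖x‖)
    (hu0 : u 0 = 0) :
    (∀ V : Set (EuclideanSpace ℝ (Fin 2)), IsOpen V → closure V ⊆ ball 0 1 →
      IsCompact (closure V) →
      BddAbove (u '' frontier V) ∧ BddBelow (u '' frontier V) ∧
      ∀ x ∈ V, u x ≤ sSup (u '' frontier V) ∧ sInf (u '' frontier V) ≤ u x) ∧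
    (¬ ContinuousWithinAt u (ball 0 1) 0) ∧
    (∀ p : ℝ, 1 ≤ p → p < 2 →
      ∫⁻ x in ball (0 : EuclideanSpace ℝ (Fin 2)) 1,
        ENNReal.ofReal (‖fderiv ℝ u x‖ ^ p) < ⊤) := by
  obtain rfl : u = coordAddCos := funext fun x => by
    rcases eq_or_ne x 0 with rfl | hx
    · simp [hu0, coordAddCos]
    · exact hu x hx
  refine ⟨fun V _ hV _ => coordAddCos_weaklyMonotone hV,
    fun h => not_continuousAt_coordAddCos (h.continuousAt (ball_mem_nhds 0 one_pos)),
    fun p hp₁ hp₂ => ?_⟩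
  refine lintegral_ball_rpow_lt_top_of_norm_le_div_norm
    (measurable_fderiv ℝ coordAddCos).aestronglyMeasurable zero_le_three
    (fun x hx hx₀ => norm_fderiv_coordAddCos_le hx₀ (mem_ball_zero_iff.1 hx).le)
    (zero_le_one.trans hp₁) ?_
  simpa using hp₂
end

section
/- Continuity at points of finite density of the gradient measure: let U be a metric surface, u : U → ℝ weakly monotone, and ρ an integrable upper gradient of u such that for every compactly contained connected neighborhood V of radius r around x₀, 2r · sup_{x,y∈V}|u(y) − u(x)| ≤ (4/π) ∫_{B(x₀,2r)} ρ dH². Then u is continuous at every point x where limsup_{r→0⁺} r^{−2} ∫_{B(x,2r)} ρ dH² < ∞; in particular u is continuous H²-almost everywhere. -/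
open Set Metric MeasureTheory Filter Topology TopologicalSpace
open scoped MeasureTheory ENNReal

/-!
At a point `x` where `∫_{B(x,2r)} ρ ≤ C r²` for small `r`, the oscillation estimate bounds the
oscillation of `u` on the component of `B(x,r)` containing `x` by `(2C/π) r`; these components
are neighbourhoods of `x` because the plane is locally connected, so `u` is continuous at `x`.
The points where `ν(B(x,r)) / r^d` is unbounded as `r → 0`, for a finite measure `ν`, form a
`μH[d]`-null set: for each `M`, a Vitali covering by balls with `ν(B(x,r)) > M r^d` shows that
their `μH[d]`-measure is at most `8^d ν(X) / M`.
-/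

theorem continuousAt_of_eventually_connectedComponentIn_ball_le {X : Type*}
    [PseudoMetricSpace X] [LocallyConnectedSpace X] {f : X → ℝ} {x : X} {g : ℝ → ℝ}
    (hg : Tendsto g (𝓝[>] 0) (𝓝 0))
    (hf : ∀ᶠ r in 𝓝[>] 0, ∀ y ∈ connectedComponentIn (ball x r) x, |f y - f x| ≤ g r) :
    ContinuousAt f x := by
  rw [ContinuousAt, Metric.tendsto_nhds]
  intro ε hε
  obtain ⟨r, hr0, hgr, hfr⟩ :=
    (eventually_mem_nhdsWithin.and ((hg.eventually (gt_mem_nhds hε)).and hf)).exists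
  filter_upwards [connectedComponentIn_mem_nhds (ball_mem_nhds x hr0)] with y hy
  exact (hfr y hy).trans_lt hgr

theorem le_two_div_pi_mul_of_ofReal_le {a r C : ℝ} {I : ℝ≥0∞} (hr : 0 < r) (hC : 0 ≤ C)
    (hosc : ENNReal.ofReal (2 * r * a) ≤ ENNReal.ofReal (4 / Real.pi) * I)
    (hI : I ≤ ENNReal.ofReal (C * r ^ 2)) :
    a ≤ 2 / Real.pi * C * r := by
  have h : ENNReal.ofReal (2 * r * a) ≤ ENNReal.ofReal (2 * r * (2 / Real.pi * C * r)) :=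
    calc ENNReal.ofReal (2 * r * a)
        ≤ ENNReal.ofReal (4 / Real.pi) * ENNReal.ofReal (C * r ^ 2) := hosc.trans (by gcongr)
      _ = ENNReal.ofReal (2 * r * (2 / Real.pi * C * r)) := by
        rw [← ENNReal.ofReal_mul (by positivity)]
        ring_nf
  exact le_of_mul_le_mul_left ((ENNReal.ofReal_le_ofReal_iff (by positivity)).mp h)
    (by positivity)

theorem eventually_isCompact_closure_ball {X : Type*} [PseudoMetricSpace X]
    [WeaklyLocallyCompactSpace X] (x : X) :
    ∀ᶠ r in 𝓝 (0 : ℝ), IsCompact (closure (ball x r)) :=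
  (eventually_isCompact_closedBall x).mono fun _ h =>
    h.of_isClosed_subset isClosed_closure closure_ball_subset_closedBall

theorem continuousAt_of_setLIntegral_ball_le_mul_sq {X : Type*} [PseudoMetricSpace X]
    [MeasurableSpace X] [WeaklyLocallyCompactSpace X] [LocallyConnectedSpace X]
    {μ : Measure X} {u : X → ℝ} {ρ : X → ℝ≥0∞} {x : X}
    (hosc : ∀ r : ℝ, 0 < r → IsCompact (closure (ball x (2 * r))) →
      ∀ y ∈ connectedComponentIn (ball x r) x,
        ENNReal.ofReal (2 * r * |u y - u x|) ≤
          ENNReal.ofReal (4 / Real.pi) * ∫⁻ z in ball x (2 * r), ρ z ∂μ)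
    {C : ℝ} (hC : ∀ᶠ r in 𝓝[>] 0, ∫⁻ z in ball x (2 * r), ρ z ∂μ ≤ ENNReal.ofReal (C * r ^ 2)) :
    ContinuousAt u x := by
  have hg : Tendsto (fun r : ℝ => 2 / Real.pi * max C 0 * r) (𝓝[>] 0) (𝓝 0) :=
    ((continuous_const_mul _).tendsto' 0 0 (mul_zero _)).mono_left nhdsWithin_le_nhds
  refine continuousAt_of_eventually_connectedComponentIn_ball_le hg ?_
  filter_upwards [hC, eventually_mem_nhdsWithin, eventually_nhdsGT_zero_mul_left two_pos
    (eventually_nhdsWithin_of_eventually_nhds (eventually_isCompact_closure_ball x))]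
    with r hr hr0 hK y hy
  refine le_two_div_pi_mul_of_ofReal_le hr0 (le_max_right C 0) (hosc r hr0 hK y hy)
    (hr.trans (ENNReal.ofReal_le_ofReal ?_))
  gcongr
  exact le_max_left C 0

theorem tendsto_ofReal_div_nat_add_one (c : ℝ) :
    Tendsto (fun n : ℕ => ENNReal.ofReal (c / (n + 1))) atTop (𝓝 0) := by
  have h := (tendsto_add_atTop_iff_nat 1).2 (tendsto_const_div_atTop_nhds_zero_nat c)
  simpa using ENNReal.tendsto_ofReal h

theorem ediam_closedBall_le_ofReal {X : Type*} [PseudoMetricSpace X] (c : X) {r : ℝ} :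
    ediam (closedBall c r) ≤ ENNReal.ofReal (2 * r) :=
  ediam_le_of_forall_dist_le fun _ hx _ hy =>
    (dist_triangle_right _ _ c).trans (by linarith [mem_closedBall.1 hx, mem_closedBall.1 hy])

theorem exists_countable_pairwiseDisjoint_closedBall_covering {X : Type*} [PseudoMetricSpace X]
    [SeparableSpace X] (E : Set X) (s : X → ℝ) (hs : ∀ x ∈ E, 0 < s x) {R : ℝ}
    (hR : ∀ x ∈ E, s x ≤ R) :
    ∃ v ⊆ E, v.Countable ∧ v.PairwiseDisjoint (fun c => closedBall c (s c)) ∧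
      E ⊆ ⋃ c ∈ v, closedBall c (4 * s c) := by
  obtain ⟨v, hvE, hdisj, hcov⟩ :=
    Vitali.exists_disjoint_subfamily_covering_enlargement_closedBall E id s R hR 4 (by norm_num)
  refine ⟨v, hvE, hdisj.countable_of_nonempty_interior fun c hc => ?_, hdisj, fun x hx => ?_⟩
  · exact ⟨c, ball_subset_interior_closedBall (mem_ball_self (hs c (hvE hc)))⟩
  · obtain ⟨b, hb, hsub⟩ := hcov x hx
    exact mem_biUnion hb (hsub (mem_closedBall_self (hs x hx).le))

theorem ediam_closedBall_four_mul_rpow_le {X : Type*} [PseudoMetricSpace X] (c : X)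
    {M d s : ℝ} (hM : 0 < M) (hd : 0 ≤ d) (hs : 0 < s) :
    ediam (closedBall c (4 * s)) ^ d ≤
      ENNReal.ofReal (8 ^ d / M) * ENNReal.ofReal (M * s ^ d) :=
  calc ediam (closedBall c (4 * s)) ^ d
      ≤ ENNReal.ofReal (2 * (4 * s)) ^ d := by gcongr; exact ediam_closedBall_le_ofReal c
    _ = ENNReal.ofReal (8 ^ d / M) * ENNReal.ofReal (M * s ^ d) := by
      rw [ENNReal.ofReal_rpow_of_nonneg (by positivity) hd, ← ENNReal.ofReal_mul (by positivity),
        show 2 * (4 * s) = 8 * s by ring, Real.mul_rpow (by norm_num) hs.le]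
      field_simp

section Hausdorff

variable {X : Type*} [MetricSpace X] [MeasurableSpace X] [BorelSpace X]

theorem exists_countable_closedBall_cover_tsum_ediam_rpow_le [SeparableSpace X] (ν : Measure X)
    {M d δ : ℝ} (hM : 0 < M) (hd : 0 ≤ d) (hδ : 0 < δ) :
    ∃ (v : Set X) (s : X → ℝ), v.Countable ∧
      (∀ c ∈ v, ediam (closedBall c (4 * s c)) ≤ ENNReal.ofReal (8 * δ)) ∧
      {x | ∃ᶠ r in 𝓝[>] 0, ENNReal.ofReal (M * r ^ d) < ν (ball x r)} ⊆
        ⋃ c ∈ v, closedBall c (4 * s c) ∧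
      ∑' c : v, ediam (closedBall (c : X) (4 * s c)) ^ d ≤
        ENNReal.ofReal (8 ^ d / M) * ν univ := by
  set E := {x | ∃ᶠ r in 𝓝[>] 0, ENNReal.ofReal (M * r ^ d) < ν (ball x r)}
  have hsel : ∀ x ∈ E, ∃ s ∈ Ioo 0 δ, ENNReal.ofReal (M * s ^ d) < ν (ball x s) := fun x hx =>
    (hx.and_eventually (Ioo_mem_nhdsGT hδ)).exists.imp fun _ h => ⟨h.2, h.1⟩
  choose! s hs hsν using hsel
  obtain ⟨v, hvE, hv, hdisj, hcov⟩ := exists_countable_pairwiseDisjoint_closedBall_covering E s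
    (fun x hx => (hs x hx).1) (fun x hx => (hs x hx).2.le)
  refine ⟨v, s, hv, fun c hc => (ediam_closedBall_le_ofReal c).trans ?_, hcov, ?_⟩
  · exact ENNReal.ofReal_le_ofReal (by linarith [(hs c (hvE hc)).2])
  calc ∑' c : v, ediam (closedBall (c : X) (4 * s c)) ^ d
      ≤ ∑' c : v, ENNReal.ofReal (8 ^ d / M) * ν (closedBall (c : X) (s c)) :=
        ENNReal.tsum_le_tsum fun c => (ediam_closedBall_four_mul_rpow_le (c : X) hM hd
          (hs c (hvE c.2)).1).trans (by
            gcongr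
            exact (hsν c (hvE c.2)).le.trans (measure_mono ball_subset_closedBall))
    _ = ENNReal.ofReal (8 ^ d / M) * ν (⋃ c ∈ v, closedBall c (s c)) := by
        rw [ENNReal.tsum_mul_left, measure_biUnion hv hdisj fun _ _ => measurableSet_closedBall]
    _ ≤ ENNReal.ofReal (8 ^ d / M) * ν univ := by gcongr; exact subset_univ _

theorem hausdorffMeasure_le_of_frequently_lt_measure_ball [SeparableSpace X] (ν : Measure X)
    {M d : ℝ} (hM : 0 < M) (hd : 0 ≤ d) :
    μH[d] {x | ∃ᶠ r in 𝓝[>] 0, ENNReal.ofReal (M * r ^ d) < ν (ball x r)} ≤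
      ENNReal.ofReal (8 ^ d / M) * ν univ := by
  choose v s hv hdiam hcov hsum using fun n : ℕ =>
    exists_countable_closedBall_cover_tsum_ediam_rpow_le ν hM hd (δ := 1 / (n + 1)) (by positivity)
  have (n : ℕ) : Countable (v n) := (hv n).to_subtype
  refine (Measure.hausdorffMeasure_le_liminf_tsum d _ _ (tendsto_ofReal_div_nat_add_one 8)
    (fun n (c : v n) => closedBall (c : X) (4 * s n c))
    (.of_forall fun n c => (hdiam n c c.2).trans_eq (by rw [mul_one_div]))
    (.of_forall fun n => by simpa only [biUnion_eq_iUnion] using hcov n)).trans ?_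
  exact liminf_le_of_frequently_le' (.of_forall hsum)

theorem ae_exists_measure_ball_le_ofReal_mul_rpow [SeparableSpace X] (ν : Measure X)
    [IsFiniteMeasure ν] {d : ℝ} (hd : 0 ≤ d) :
    ∀ᵐ x ∂(μH[d] : Measure X), ∃ C : ℝ, ∀ᶠ r in 𝓝[>] 0,
      ν (ball x r) ≤ ENNReal.ofReal (C * r ^ d) := by
  rw [ae_iff]
  have hle (n : ℕ) : μH[d] {x | ¬∃ C : ℝ, ∀ᶠ r in 𝓝[>] 0,
      ν (ball x r) ≤ ENNReal.ofReal (C * r ^ d)} ≤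
        ENNReal.ofReal (8 ^ d / (n + 1)) * ν univ := by
    refine (measure_mono fun x hx => ?_).trans
      (hausdorffMeasure_le_of_frequently_lt_measure_ball ν n.cast_add_one_pos hd)
    push Not at hx
    exact hx (n + 1)
  have htend := ENNReal.Tendsto.mul_const (tendsto_ofReal_div_nat_add_one (8 ^ d))
    (Or.inr (measure_ne_top ν univ))
  rw [zero_mul] at htend
  exact le_zero_iff.mp (ge_of_tendsto' htend hle)

end Hausdorff

theorem continuity_at_finite_density_general {U : Type*} [MetricSpace U]
    [MeasurableSpace U] [BorelSpace U] (hU : Nonempty (U ≃ₜ (ℝ × ℝ)))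
    (u : U → ℝ) (ρ : U → ℝ≥0∞)
    (hρint : ∫⁻ x, ρ x ∂(μH[2] : Measure U) < ⊤)
    (hosc : ∀ x₀ : U, ∀ r : ℝ, 0 < r → IsCompact (closure (ball x₀ (2 * r))) →
      ∀ x ∈ connectedComponentIn (ball x₀ r) x₀,
      ∀ y ∈ connectedComponentIn (ball x₀ r) x₀,
        ENNReal.ofReal (2 * r * |u y - u x|) ≤
          ENNReal.ofReal (4 / Real.pi) *
            ∫⁻ z in ball x₀ (2 * r), ρ z ∂(μH[2] : Measure U)) :
    (∀ x : U,
      (∃ C : ℝ, ∀ᶠ r in nhdsWithin (0 : ℝ) (Ioi 0),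
        ∫⁻ z in ball x (2 * r), ρ z ∂(μH[2] : Measure U) ≤ ENNReal.ofReal (C * r ^ 2)) →
      ContinuousAt u x) ∧
    (∀ᵐ x ∂(μH[2] : Measure U), ContinuousAt u x) := by
  obtain ⟨e⟩ := hU
  have : LocallyCompactSpace U := e.locallyCompactSpace_iff.mpr inferInstance
  have : LocallyConnectedSpace U := e.locallyConnectedSpace
  have : SecondCountableTopology U := e.secondCountableTopology
  have hcont : ∀ x : U, (∃ C : ℝ, ∀ᶠ r in 𝓝[>] 0,
      ∫⁻ z in ball x (2 * r), ρ z ∂(μH[2] : Measure U) ≤ ENNReal.ofReal (C * r ^ 2)) →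
      ContinuousAt u x := fun x ⟨_, hC⟩ =>
    continuousAt_of_setLIntegral_ball_le_mul_sq
      (fun r hr hK => hosc x r hr hK x (mem_connectedComponentIn (mem_ball_self hr))) hC
  refine ⟨hcont, ?_⟩
  have : IsFiniteMeasure ((μH[2] : Measure U).withDensity ρ) :=
    isFiniteMeasure_withDensity hρint.ne
  filter_upwards [ae_exists_measure_ball_le_ofReal_mul_rpow
    ((μH[2] : Measure U).withDensity ρ) zero_le_two] with x ⟨C, hC⟩
  refine hcont x ⟨4 * C, ?_⟩
  filter_upwards [eventually_nhdsGT_zero_mul_left two_pos hC] with r hr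
  rw [withDensity_apply _ measurableSet_ball, Real.rpow_two] at hr
  exact hr.trans_eq (by ring_nf)

/-- Continuity of a weakly monotone function at points of finite density of the gradient
measure, given the oscillation estimate; in particular continuity `H²`-almost everywhere. -/
theorem continuity_at_finite_density {U : Type*} [MetricSpace U]
    [MeasurableSpace U] [BorelSpace U] (hU : Nonempty (U ≃ₜ (ℝ × ℝ)))
    (hloc : ∀ K : Set U, IsCompact K → (μH[2] : Measure U) K < ⊤)
    (u : U → ℝ) (ρ : U → ℝ≥0∞) (hρmeas : Measurable ρ)
    (hρint : ∫⁻ x, ρ x ∂(μH[2] : Measure U) < ⊤)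
    (hmono : ∀ V : Set U, IsOpen V → IsCompact (closure V) →
      BddAbove (u '' frontier V) ∧ BddBelow (u '' frontier V) ∧
      ∀ x ∈ V, u x ≤ sSup (u '' frontier V) ∧ sInf (u '' frontier V) ≤ u x)
    (hosc : ∀ x₀ : U, ∀ r : ℝ, 0 < r → IsCompact (closure (ball x₀ (2 * r))) →
      ∀ x ∈ connectedComponentIn (ball x₀ r) x₀,
      ∀ y ∈ connectedComponentIn (ball x₀ r) x₀,
        ENNReal.ofReal (2 * r * |u y - u x|) ≤
          ENNReal.ofReal (4 / Real.pi) *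
            ∫⁻ z in ball x₀ (2 * r), ρ z ∂(μH[2] : Measure U)) :
    (∀ x : U,
      (∃ C : ℝ, ∀ᶠ r in nhdsWithin (0 : ℝ) (Ioi 0),
        ∫⁻ z in ball x (2 * r), ρ z ∂(μH[2] : Measure U) ≤ ENNReal.ofReal (C * r ^ 2)) →
      ContinuousAt u x) ∧
    (∀ᵐ x ∂(μH[2] : Measure U), ContinuousAt u x) :=
  continuity_at_finite_density_general hU u ρ hρint hosc
end
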